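/- Let w be a word over a finite alphabet Σ, let k ∈ [|w|], and let u ∈ ScatFact_k(w). Then there exists a sequence of indices 1 ≤ j_1 < j_2 < ⋯ < j_k ≤ |w| such that: (1) w[j_1]⋯w[j_k] = u; (2) the letter w[j_1] does not occur in the prefix w[1..j_1 − 1]; (3) nextAlphPos_w(j_i, |alph(w[j_i + 1..j_{i+1}])|) = j_{i+1} for all i ∈ [k − 1]. Moreover, for any other sequence of indices 1 ≤ j'_1 < j'_2 < ⋯ < j'_k ≤ |w| with w[j'_1]⋯w[j'_k] = u, we have j_i ≤ j'_i for every i ∈ [k]. -/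

import Mathlib

open List

universe u
variable {α : Type u}

/-- `ScatFact k w` is the set of scattered factors (subsequences) of `w` of length exactly `k`. -/
def ScatFact (k : ℕ) (w : List α) : Set (List α) :=
  {v | v.length = k ∧ v.Sublist w}

/-- `w` is `k`-universal over the alphabet `S`: every word of length `k` over `S`
is a scattered factor of `w`. -/
def IsKUniversal [DecidableEq α] (S : Finset α) (k : ℕ) (w : List α) : Prop :=
  ∀ v : List α, v.length = k → (∀ x ∈ v, x ∈ S) → v.Sublist w

/-- The universality index of `w` over the alphabet `S`: the largest `k` such that
`w` is `k`-universal over `S`. -/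
noncomputable def univIdx [DecidableEq α] (S : Finset α) (w : List α) : ℕ :=
  sSup {k | IsKUniversal S k w}

/-- `IsArchFact S w inners modus rest` says that `w` has the arch factorization
`w = ar_1 ⋯ ar_n · rest` over the alphabet `S`, where the `i`-th arch is
`ar_i = inners[i] ++ [modus[i]]`: each arch contains every letter of `S`,
the last letter of each arch occurs only once within the arch, and the
alphabet of the rest is a proper subset of `S`. -/
def IsArchFact [DecidableEq α] (S : Finset α) (w : List α)
    (inners : List (List α)) (modus : List α) (rest : List α) : Prop :=
  inners.length = modus.length ∧
  w = (List.zipWith (fun inn m => inn ++ [m]) inners modus).flatten ++ rest ∧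
  (∀ p ∈ List.zip inners modus, ∀ x ∈ S, x ∈ p.1 ++ [p.2]) ∧
  (∀ p ∈ List.zip inners modus, p.2 ∉ p.1) ∧
  rest.toFinset ⊂ S

/-- `v` is perfect `k`-universal over `S`: `alph(v) = S`, the universality index of `v`
over `S` is `k`, and the rest of its arch factorization over `S` is empty. -/
def IsPerfectUniv [DecidableEq α] (S : Finset α) (k : ℕ) (v : List α) : Prop :=
  v.toFinset = S ∧ univIdx S v = k ∧ ∃ inners modus, IsArchFact S v inners modus []

/-- `v` is minimal perfect `k`-universal over `S`. -/
def IsMinPerfectUniv [DecidableEq α] (S : Finset α) (k : ℕ) (v : List α) : Prop :=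
  IsPerfectUniv S k v ∧ ∀ v' : List α, IsPerfectUniv S k v' → v.length ≤ v'.length

/-- `nextAlphPos w i s` (positions `1`-indexed): the least position `j` such that
`w[i+1..j]` contains exactly `s` distinct letters, or `none` (representing `-1`)
if `w[i+1..|w|]` contains fewer than `s` distinct letters. -/
noncomputable def nextAlphPos [DecidableEq α] (w : List α) (i s : ℕ) : Option ℕ :=
  if (w.drop i).toFinset.card < s then none
  else some (sInf {j | ((w.drop i).take (j - i)).toFinset.card = s})

/-- The letter of `w` at (1-indexed) position `j`. -/
def letterAt [Inhabited α] (w : List α) (j : ℕ) : α := w.getD (j - 1) default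

/-- The word over `Fin σ` with `ι` arches, whose first arch is `a_1 a_2 ⋯ a_σ`
and each later arch is the reverse of the previous one. -/
def wmin (σ ι : ℕ) : List (Fin σ) :=
  ((List.range ι).map (fun i =>
    if i % 2 = 0 then List.finRange σ else (List.finRange σ).reverse)).flatten

/-!
The witness is the leftmost embedding of `u` into `w`: `j₁` is the first occurrence of `u₁` in
`w`, and `jᵢ₊₁` the first occurrence of `uᵢ₊₁` after `jᵢ`. Any embedding `j'` satisfies
`j'ᵢ₊₁ > j'ᵢ ≥ jᵢ` and carries the letter `uᵢ₊₁` at `j'ᵢ₊₁`, so `jᵢ₊₁ ≤ j'ᵢ₊₁` by induction.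
Since `w[jᵢ₊₁]` does not occur in `w[jᵢ+1..jᵢ₊₁-1]`, the alphabet of `w[jᵢ+1..j]` is strictly
smaller for every `j < jᵢ₊₁` than for `j = jᵢ₊₁`, which is what `nextAlphPos` asks for.
-/

namespace List

variable [DecidableEq α]

theorem idxOf_le_of_getElem_eq {l : List α} {a : α} {i : ℕ} (hi : i < l.length)
    (h : l[i] = a) : l.idxOf a ≤ i := by
  induction l generalizing i with
  | nil => simp at hi
  | cons b l ih =>
    by_cases hb : b = a
    · simp [idxOf_cons_eq _ hb]
    · cases i with
      | zero => exact absurd h hb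
      | succ i => simpa [idxOf_cons_ne _ hb] using ih (by simpa using hi) h

theorem notMem_take_idxOf (l : List α) (a : α) : a ∉ l.take (l.idxOf a) := by
  induction l with
  | nil => simp
  | cons b l ih =>
    by_cases hb : b = a
    · simp [idxOf_cons_eq _ hb]
    · simp [idxOf_cons_ne _ hb, ih, Ne.symm hb]

theorem Sublist.sublist_drop_idxOf_succ {a : α} {v l : List α} (h : a :: v <+ l) :
    v <+ l.drop (l.idxOf a + 1) := by
  induction l with
  | nil => simp at h
  | cons b l ih =>
    by_cases hb : b = a
    · subst hb
      simpa using cons_sublist_cons.mp h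
    · rw [idxOf_cons_ne _ hb]
      cases h with
      | cons _ h => exact ih h
      | cons_cons _ h => exact absurd rfl hb

end List

theorem letterAt_eq_getElem [Inhabited α] {w : List α} {q : ℕ} (hq0 : 0 < q) (hq : q ≤ w.length) :
    letterAt w q = w[q - 1] := by
  rw [letterAt, getD_eq_getElem]

section Greedy

variable [DecidableEq α] {w : List α} {p q : ℕ} {a : α}

theorem nextAlphPos_eq_some [Inhabited α] (hpq : p < q) (hq : q ≤ w.length)
    (hnew : letterAt w q ∉ (w.drop p).take (q - 1 - p)) :
    nextAlphPos w p (((w.drop p).take (q - p)).toFinset.card) = some q := by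
  set v := w.drop p
  have hmem : letterAt w q ∈ v.take (q - p) := by
    rw [letterAt_eq_getElem (by omega) hq, mem_take_iff_getElem]
    exact ⟨q - 1 - p, by simp only [length_drop, lt_inf_iff, v]; omega,
      by simp only [getElem_drop, v]; congr 1; omega⟩
  have hlt : ∀ j < q, (v.take (j - p)).toFinset.card < (v.take (q - p)).toFinset.card := by
    intro j hj
    have hpre : v.take (j - p) <+: v.take (q - 1 - p) := take_prefix_take_left (by omega)
    have hsub : (v.take (j - p)).toFinset ⊆ (v.take (q - p)).toFinset := by
      intro x
      simpa using fun hx => (take_prefix_take_left (by omega)).subset hx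
    refine Finset.card_lt_card ((Finset.ssubset_iff_of_subset hsub).2 ?_)
    exact ⟨letterAt w q, by simpa using hmem, fun h => hnew (hpre.subset (by simpa using h))⟩
  have hcard : ¬ v.toFinset.card < (v.take (q - p)).toFinset.card :=
    not_lt.2 (Finset.card_le_card fun x => by simpa using fun hx => (take_subset _ _) hx)
  rw [nextAlphPos, if_neg hcard]
  refine congrArg some (le_antisymm (Nat.sInf_le rfl) (le_csInf ⟨q, rfl⟩ fun j hj => ?_))
  by_contra! hjq
  exact (hlt j hjq).ne hj

/-- The (1-indexed) position of the first `a` in `w` strictly after position `p`; it is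
`p + |w.drop p| + 1` if there is none. -/
def nextOcc (w : List α) (p : ℕ) (a : α) : ℕ := p + (w.drop p).idxOf a + 1

theorem lt_nextOcc : p < nextOcc w p a := by
  unfold nextOcc; omega

theorem nextOcc_le_length (h : a ∈ w.drop p) : nextOcc w p a ≤ w.length := by
  have := idxOf_lt_length_iff.2 h
  simp only [length_drop] at this
  unfold nextOcc; omega

theorem letterAt_nextOcc [Inhabited α] (h : a ∈ w.drop p) : letterAt w (nextOcc w p a) = a := by
  have hlt := idxOf_lt_length_iff.2 h
  have hpos : nextOcc w p a - 1 = p + (w.drop p).idxOf a := by unfold nextOcc; omega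
  rw [letterAt, hpos, getD_eq_getElem?_getD, ← getElem?_drop, getElem?_eq_getElem hlt,
    getElem_idxOf hlt, Option.getD_some]

theorem letterAt_nextOcc_notMem_take [Inhabited α] (h : a ∈ w.drop p) :
    letterAt w (nextOcc w p a) ∉ (w.drop p).take (nextOcc w p a - 1 - p) := by
  rw [letterAt_nextOcc h, show nextOcc w p a - 1 - p = (w.drop p).idxOf a by unfold nextOcc; omega]
  exact notMem_take_idxOf _ a

theorem nextOcc_le [Inhabited α] (hpq : p < q) (hq : q ≤ w.length) (ha : letterAt w q = a) :
    nextOcc w p a ≤ q := by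
  rw [letterAt_eq_getElem (by omega) hq] at ha
  have : (w.drop p).idxOf a ≤ q - 1 - p :=
    idxOf_le_of_getElem_eq (by simp only [length_drop]; omega) (by rw [getElem_drop, ← ha]; congr 1; omega)
  unfold nextOcc; omega

theorem sublist_drop_nextOcc {v : List α} (h : a :: v <+ w.drop p) :
    v <+ w.drop (nextOcc w p a) := by
  simpa [nextOcc, drop_drop, Nat.add_assoc] using h.sublist_drop_idxOf_succ

theorem nextAlphPos_nextOcc [Inhabited α] (h : a ∈ w.drop p) :
    nextAlphPos w p (((w.drop p).take (nextOcc w p a - p)).toFinset.card) =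
      some (nextOcc w p a) :=
  nextAlphPos_eq_some lt_nextOcc (nextOcc_le_length h) (letterAt_nextOcc_notMem_take h)

/-- `greedyPos w u (i + 1)` is the position of `u[i]` in the leftmost embedding of `u` into `w`;
`greedyPos w u 0 = 0` is a virtual starting position. -/
def greedyPos [Inhabited α] (w u : List α) : ℕ → ℕ
  | 0 => 0
  | i + 1 => nextOcc w (greedyPos w u i) (u.getD i default)

variable [Inhabited α] {u : List α}

theorem strictMono_greedyPos : StrictMono (greedyPos w u) :=
  strictMono_nat_of_lt_succ fun _ => lt_nextOcc

theorem drop_sublist_drop_greedyPos (h : u <+ w) :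
    ∀ {i}, i ≤ u.length → u.drop i <+ w.drop (greedyPos w u i)
  | 0, _ => by simpa [greedyPos] using h
  | i + 1, hi => by
    have := drop_sublist_drop_greedyPos h (i := i) (by omega)
    rw [drop_eq_getElem_cons (by omega), ← getD_eq_getElem _ default] at this
    exact sublist_drop_nextOcc this

theorem getD_mem_drop_greedyPos (h : u <+ w) {i : ℕ} (hi : i < u.length) :
    u.getD i default ∈ w.drop (greedyPos w u i) := by
  have := drop_sublist_drop_greedyPos h hi.le
  rw [drop_eq_getElem_cons hi] at this
  rw [getD_eq_getElem _ _ hi]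
  exact this.subset mem_cons_self

theorem greedyPos_succ_le {k : ℕ} {g : Fin k → ℕ} (hg : StrictMono g)
    (hg_bdd : ∀ i, 1 ≤ g i ∧ g i ≤ w.length) (hgu : List.ofFn (fun i => letterAt w (g i)) = u) :
    ∀ i : Fin k, greedyPos w u (i + 1) ≤ g i := by
  have hletter : ∀ i : Fin k, letterAt w (g i) = u.getD i default := fun i => by
    simp [← hgu, getD_eq_getElem?_getD]
  suffices ∀ i (hi : i < k), greedyPos w u (i + 1) ≤ g ⟨i, hi⟩ from fun i => this i i.2
  intro i hi
  induction i with
  | zero => exact nextOcc_le (hg_bdd _).1 (hg_bdd _).2 (hletter _)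
  | succ i ih =>
    have hlt : g ⟨i, by omega⟩ < g ⟨i + 1, hi⟩ := hg (Fin.mk_lt_mk.2 (by omega))
    exact nextOcc_le ((ih (by omega)).trans_lt hlt) (hg_bdd _).2 (hletter _)

end Greedy

theorem stmt13_general {α : Type u} [DecidableEq α] [Inhabited α]
    (w : List α) (k : ℕ) (hk1 : 1 ≤ k)
    (u : List α) (hu : u ∈ ScatFact k w) :
    ∃ j : Fin k → ℕ, StrictMono j ∧ (∀ i, 1 ≤ j i ∧ j i ≤ w.length) ∧
      (List.ofFn fun i => letterAt w (j i)) = u ∧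
      letterAt w (j ⟨0, hk1⟩) ∉ w.take (j ⟨0, hk1⟩ - 1) ∧
      (∀ i : Fin k, ∀ h : i.val + 1 < k,
        nextAlphPos w (j i)
            (((w.drop (j i)).take (j ⟨i.val + 1, h⟩ - j i)).toFinset.card) =
          some (j ⟨i.val + 1, h⟩)) ∧
      (∀ j' : Fin k → ℕ, StrictMono j' → (∀ i, 1 ≤ j' i ∧ j' i ≤ w.length) →
        (List.ofFn fun i => letterAt w (j' i)) = u → ∀ i, j i ≤ j' i) := by
  obtain ⟨rfl, hsub⟩ := hu
  have hmem {i : ℕ} (hi : i < u.length) := getD_mem_drop_greedyPos hsub hi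
  refine ⟨fun i => greedyPos w u (i + 1), ?_, fun i => ⟨?_, nextOcc_le_length (hmem i.2)⟩, ?_,
    ?_, fun i h => nextAlphPos_nextOcc (hmem h),
    fun j' hj' hj'_bdd hj'u => greedyPos_succ_le hj' hj'_bdd hj'u⟩
  · exact strictMono_greedyPos.comp fun _ _ h => Nat.succ_lt_succ h
  · exact strictMono_greedyPos (Nat.succ_pos _)
  · refine ext_getElem (by simp) fun i _ hi => ?_
    rw [List.getElem_ofFn]
    exact (letterAt_nextOcc (hmem hi)).trans (getD_eq_getElem _ _ hi)
  · simpa [greedyPos] using letterAt_nextOcc_notMem_take (hmem hk1)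

theorem stmt13 {α : Type u} [DecidableEq α] [Inhabited α]
    (w : List α) (k : ℕ) (hk1 : 1 ≤ k) (hk2 : k ≤ w.length)
    (u : List α) (hu : u ∈ ScatFact k w) :
    ∃ j : Fin k → ℕ, StrictMono j ∧ (∀ i, 1 ≤ j i ∧ j i ≤ w.length) ∧
      (List.ofFn fun i => letterAt w (j i)) = u ∧
      letterAt w (j ⟨0, hk1⟩) ∉ w.take (j ⟨0, hk1⟩ - 1) ∧
      (∀ i : Fin k, ∀ h : i.val + 1 < k,
        nextAlphPos w (j i)
            (((w.drop (j i)).take (j ⟨i.val + 1, h⟩ - j i)).toFinset.card) =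
          some (j ⟨i.val + 1, h⟩)) ∧
      (∀ j' : Fin k → ℕ, StrictMono j' → (∀ i, 1 ≤ j' i ∧ j' i ≤ w.length) →
        (List.ofFn fun i => letterAt w (j' i)) = u → ∀ i, j i ≤ j' i) :=
  stmt13_general w k hk1 u hu
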